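/- Let (X, d̂) be a bounded metric space, ρ: F_∞ → Homeo(X) an action by homeomorphisms (each ρ(g) continuous), s > log 3, and δ := Σ_{g∈F_∞} exp(-s‖g‖)·d̂∘ρ(g)⁻¹. Then δ induces the same topology on X as d̂; that is, for every x ∈ X and r > 0 there is r' > 0 such that the d̂-ball of radius r' about x is contained in the δ-ball of radius r about x (and δ ≥ d̂ gives the converse inclusion). -/

import Mathlib

/-- The group of self-homeomorphisms of `X`, under composition. -/
instance homeoGroup (X : Type*) [TopologicalSpace X] : Group (X ≃ₜ X) where
  mul f g := g.trans f
  one := Homeomorph.refl X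
  inv := Homeomorph.symm
  mul_assoc f g h := rfl
  one_mul f := by ext x; rfl
  mul_one f := by ext x; rfl
  inv_mul_cancel f := by ext x; exact f.symm_apply_apply x

/-- The embedding `F_∞ → F₂ = ⟨x,t⟩`, `x_i ↦ t^i x t^{-i}`. -/
def embed : FreeGroup ℕ →* FreeGroup Bool :=
  FreeGroup.lift fun i : ℕ =>
    (FreeGroup.of true : FreeGroup Bool) ^ i * FreeGroup.of false *
      ((FreeGroup.of true) ^ i)⁻¹

/-- Word length of `g ∈ F_∞`, measured in `F₂` via the embedding `x_i ↦ t^i x t^{-i}`. -/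
def wl (g : FreeGroup ℕ) : ℕ := (embed g).norm

/-- The averaged distance `δ(x,y) = ∑_{g ∈ F_∞} exp(-s‖g‖) d̂(ρ(g)⁻¹ x, ρ(g)⁻¹ y)`. -/
noncomputable def delta {X : Type*} [MetricSpace X] (ρ : FreeGroup ℕ →* (X ≃ₜ X)) (s : ℝ)
    (x y : X) : ℝ :=
  ∑' g : FreeGroup ℕ, Real.exp (-s * (wl g : ℝ)) * dist ((ρ g).symm x) ((ρ g).symm y)

/-! ### Injectivity of `embed` -/

/-- Shift automorphisms of `FreeGroup ℤ`. -/
def shiftHom : Multiplicative ℤ →* MulAut (FreeGroup ℤ) where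
  toFun n := (FreeGroup.freeGroupCongr (Equiv.addRight (Multiplicative.toAdd n)))
  map_one' := by
    convert FreeGroup.freeGroupCongr_refl (α := ℤ) using 2
    ext x; simp
    rfl
  map_mul' m n := by
    rw [MulAut.mul_def, FreeGroup.freeGroupCongr_trans]
    ext x
    simp [add_assoc, add_comm]

local notation "G2" => SemidirectProduct (FreeGroup ℤ) (Multiplicative ℤ) shiftHom

def Phi : FreeGroup Bool →* G2 :=
  FreeGroup.lift fun b =>
    if b then SemidirectProduct.inr (Multiplicative.ofAdd 1)
    else SemidirectProduct.inl (FreeGroup.of (0 : ℤ))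

def iota : FreeGroup ℕ →* G2 :=
  SemidirectProduct.inl.comp (FreeGroup.map (fun n : ℕ => (n : ℤ)))

lemma Phi_comp_embed : Phi.comp embed = iota := by
  apply FreeGroup.ext_hom
  intro i
  have hof : embed (FreeGroup.of i)
      = (FreeGroup.of true : FreeGroup Bool) ^ i * FreeGroup.of false *
        ((FreeGroup.of true) ^ i)⁻¹ := FreeGroup.lift_apply_of
  have ht : Phi (FreeGroup.of true) = SemidirectProduct.inr (Multiplicative.ofAdd 1) := by
    simp [Phi, FreeGroup.lift_apply_of]
  have hf : Phi (FreeGroup.of false) = SemidirectProduct.inl (FreeGroup.of (0 : ℤ)) := by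
    simp [Phi, FreeGroup.lift_apply_of]
  have hpow : Phi ((FreeGroup.of true : FreeGroup Bool) ^ i)
      = SemidirectProduct.inr (Multiplicative.ofAdd (i : ℤ)) := by
    rw [map_pow, ht, ← map_pow]
    congr 1
    rw [← ofAdd_nsmul]
    simp
  have key : Phi (embed (FreeGroup.of i))
      = SemidirectProduct.inl (shiftHom (Multiplicative.ofAdd (i : ℤ)) (FreeGroup.of (0 : ℤ))) := by
    rw [hof]
    simp only [map_mul, map_inv, hpow, hf]
    rw [SemidirectProduct.inl_aut, map_inv]
  rw [MonoidHom.comp_apply, key]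
  have : shiftHom (Multiplicative.ofAdd (i : ℤ)) (FreeGroup.of (0 : ℤ))
      = FreeGroup.of (i : ℤ) := by
    simp [shiftHom]
  rw [this]
  simp [iota, FreeGroup.map.of]

lemma embed_injective : Function.Injective embed := by
  have hiota : Function.Injective iota := by
    have h1 : Function.Injective (FreeGroup.map (fun n : ℕ => (n : ℤ))) := by
      have : Function.LeftInverse (FreeGroup.map Int.toNat)
          (FreeGroup.map (fun n : ℕ => (n : ℤ))) := by
        intro x
        rw [FreeGroup.map.comp]
        simp only [Function.comp_def, Int.toNat_natCast]
        exact FreeGroup.map.id' x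
      exact this.injective
    exact SemidirectProduct.inl_injective.comp h1
  intro a b hab
  apply hiota
  rw [← Phi_comp_embed]
  simp [MonoidHom.comp_apply, hab]

/-! ### Counting reduced words in `F₂` -/

abbrev L2 := Bool × Bool

/-- letters that can legally precede the reduced word `t` -/
def goodL (t : List L2) : Finset L2 :=
  Finset.univ.filter (fun a => FreeGroup.reduce (a :: t) = a :: t)

/-- the finset of reduced words of length `n` over two letters -/
def RW : ℕ → Finset (List L2)
  | 0 => {[]}
  | n+1 => (RW n).biUnion (fun t => (goodL t).image (· :: t))

lemma reduce_tail {a : L2} {t : List L2} (h : FreeGroup.reduce (a :: t) = a :: t) :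
    FreeGroup.reduce t = t := by
  rw [FreeGroup.reduce.cons] at h
  rcases hrt : FreeGroup.reduce t with _ | ⟨b, u⟩
  · rw [hrt] at h
    simp at h
    subst h; rfl
  · rw [hrt] at h
    by_cases hc : a.1 = b.1 ∧ a.2 = !b.2
    · simp only [hc, if_pos, and_self] at h
      exfalso
      have hlen : u.length ≤ t.length := by
        have := (FreeGroup.reduce.red (L := t)).length_le
        rw [hrt] at this; simpa using Nat.le_of_succ_le this
      have := congrArg List.length h
      simp at this
      omega
    · simp only [hc, if_neg, not_false_iff] at h
      rw [List.cons_eq_cons] at h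
      exact h.2

lemma mem_RW_iff : ∀ n (l : List L2),
    l ∈ RW n ↔ (l.length = n ∧ FreeGroup.reduce l = l) := by
  intro n
  induction n with
  | zero =>
    intro l
    simp only [RW, Finset.mem_singleton]
    constructor
    · rintro rfl; exact ⟨rfl, rfl⟩
    · rintro ⟨h1, _⟩; exact List.length_eq_zero_iff.mp h1
  | succ n ih =>
    intro l
    simp only [RW, Finset.mem_biUnion, Finset.mem_image]
    constructor
    · rintro ⟨t, ht, a, ha, rfl⟩
      obtain ⟨hlen, _⟩ := (ih t).mp ht
      simp only [goodL, Finset.mem_filter] at ha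
      exact ⟨by simp [hlen], ha.2⟩
    · rintro ⟨hlen, hred⟩
      rcases l with _ | ⟨a, t⟩
      · simp at hlen
      · refine ⟨t, (ih t).mpr ⟨by simpa using hlen, reduce_tail hred⟩, a, ?_, rfl⟩
        simp only [goodL, Finset.mem_filter]
        exact ⟨Finset.mem_univ _, hred⟩

lemma goodL_card_le_four (t : List L2) : (goodL t).card ≤ 4 := by
  have := Finset.card_filter_le (Finset.univ : Finset L2)
      (fun a => FreeGroup.reduce (a :: t) = a :: t)
  simpa [goodL] using this.trans (by simp)

lemma goodL_card_le_three {b : L2} {u : List L2} (hred : FreeGroup.reduce (b :: u) = b :: u) :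
    (goodL (b :: u)).card ≤ 3 := by
  have hsub : goodL (b :: u) ⊆ Finset.univ.erase (b.1, !b.2) := by
    intro a ha
    simp only [goodL, Finset.mem_filter] at ha
    rw [Finset.mem_erase]
    refine ⟨?_, Finset.mem_univ _⟩
    rintro rfl
    have : FreeGroup.reduce ((b.1, !b.2) :: b :: u) = u := by
      rw [FreeGroup.reduce.cons, hred]
      simp
    rw [ha.2] at this
    have := congrArg List.length this
    simp at this
    omega
  have := Finset.card_le_card hsub
  rw [Finset.card_erase_of_mem (Finset.mem_univ _)] at this
  simpa using this

lemma RW_card_le : ∀ n, (RW n).card ≤ 4 * 3 ^ n := by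
  intro n
  induction n with
  | zero => simp [RW]
  | succ n ih =>
    have hstep : (RW (n+1)).card ≤ ∑ t ∈ RW n, (goodL t).card :=
      Finset.card_biUnion_le.trans (Finset.sum_le_sum fun t _ => Finset.card_image_le)
    rcases Nat.eq_zero_or_pos n with rfl | hn
    · refine hstep.trans ?_
      have : ∑ t ∈ RW 0, (goodL t).card ≤ ∑ _t ∈ RW 0, 4 :=
        Finset.sum_le_sum fun t _ => goodL_card_le_four t
      refine this.trans ?_
      simp [RW]
    · have h3 : ∀ t ∈ RW n, (goodL t).card ≤ 3 := by
        intro t ht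
        obtain ⟨hlen, hred⟩ := (mem_RW_iff n t).mp ht
        rcases t with _ | ⟨b, u⟩
        · simp at hlen; omega
        · exact goodL_card_le_three hred
      calc (RW (n+1)).card ≤ ∑ t ∈ RW n, (goodL t).card := hstep
        _ ≤ ∑ _t ∈ RW n, 3 := Finset.sum_le_sum h3
        _ = 3 * (RW n).card := by rw [Finset.sum_const]; ring
        _ ≤ 3 * (4 * 3 ^ n) := by omega
        _ = 4 * 3 ^ (n+1) := by ring

/-! ### Summability -/

lemma summable_exp_norm {s : ℝ} (hs : Real.log 3 < s) :
    Summable (fun w : FreeGroup Bool => Real.exp (-s * (w.norm : ℝ))) := by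
  set q : ℝ := 3 * Real.exp (-s) with hq
  have hq0 : 0 ≤ q := by positivity
  have hq1 : q < 1 := by
    have h1 : Real.exp (-s) < Real.exp (-Real.log 3) := by
      apply Real.exp_lt_exp.mpr; linarith
    have h2 : Real.exp (-Real.log 3) = 3⁻¹ := by
      rw [Real.exp_neg, Real.exp_log]; norm_num
    rw [hq]
    calc 3 * Real.exp (-s) < 3 * 3⁻¹ := by rw [← h2]; nlinarith [h1]
      _ = 1 := by norm_num
  have hgeom : Summable (fun n : ℕ => q ^ n) := summable_geometric_of_lt_one hq0 hq1
  apply summable_of_sum_le (c := 4 * ∑' n : ℕ, q ^ n)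
  · intro w; positivity
  · intro u
    classical
    set N := u.sup FreeGroup.norm with hN
    have hmaps : ∀ w ∈ u, FreeGroup.norm w ∈ Finset.range (N + 1) := by
      intro w hw
      simp only [Finset.mem_range]
      exact Nat.lt_succ_of_le (Finset.le_sup hw)
    rw [← Finset.sum_fiberwise_of_maps_to hmaps]
    have hterm : ∀ n ∈ Finset.range (N + 1),
        ∑ w ∈ u.filter (fun w => FreeGroup.norm w = n), Real.exp (-s * (w.norm : ℝ))
          ≤ 4 * q ^ n := by
      intro n _
      have hcard : (u.filter (fun w => FreeGroup.norm w = n)).card ≤ (RW n).card := by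
        apply Finset.card_le_card_of_injOn (fun w => FreeGroup.toWord w)
        · intro w hw
          simp only [Finset.mem_coe, Finset.mem_filter, Finset.coe_filter, Set.mem_setOf_eq] at hw ⊢
          rw [mem_RW_iff]
          exact ⟨hw.2, FreeGroup.reduce_toWord w⟩
        · exact fun a _ b _ h => FreeGroup.toWord_injective h
      have heq : ∑ w ∈ u.filter (fun w => FreeGroup.norm w = n), Real.exp (-s * (w.norm : ℝ))
          = (u.filter (fun w => FreeGroup.norm w = n)).card * Real.exp (-s * n) := by
        rw [Finset.sum_congr rfl (fun w hw => ?_), Finset.sum_const, nsmul_eq_mul]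
        simp only [Finset.mem_filter] at hw
        rw [hw.2]
      rw [heq]
      have h4 : ((u.filter (fun w => FreeGroup.norm w = n)).card : ℝ) ≤ 4 * 3 ^ n := by
        have := hcard.trans (RW_card_le n)
        exact_mod_cast this
      have hqn : (3:ℝ) ^ n * Real.exp (-s * n) = q ^ n := by
        rw [hq, mul_pow, mul_comm (-s) (n:ℝ), Real.exp_nat_mul]
      calc ((u.filter (fun w => FreeGroup.norm w = n)).card : ℝ) * Real.exp (-s * n)
          ≤ (4 * 3 ^ n) * Real.exp (-s * n) := by
            apply mul_le_mul_of_nonneg_right h4 (Real.exp_nonneg _)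
        _ = 4 * (3 ^ n * Real.exp (-s * n)) := by ring
        _ = 4 * q ^ n := by rw [hqn]
    calc ∑ n ∈ Finset.range (N + 1), ∑ w ∈ u.filter (fun w => FreeGroup.norm w = n),
          Real.exp (-s * (w.norm : ℝ))
        ≤ ∑ n ∈ Finset.range (N + 1), 4 * q ^ n := Finset.sum_le_sum hterm
      _ = 4 * ∑ n ∈ Finset.range (N + 1), q ^ n := by rw [Finset.mul_sum]
      _ ≤ 4 * ∑' n : ℕ, q ^ n := by
          apply mul_le_mul_of_nonneg_left _ (by norm_num)
          exact Summable.sum_le_tsum _ (fun n _ => by positivity) hgeom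

lemma summable_exp_wl {s : ℝ} (hs : Real.log 3 < s) :
    Summable (fun g : FreeGroup ℕ => Real.exp (-s * (wl g : ℝ))) :=
  (summable_exp_norm hs).comp_injective embed_injective

/-- With `δ = ∑_{g ∈ F_∞} exp(-s‖g‖) d̂ ∘ ρ(g)⁻¹` as above (each `ρ(g)` a homeomorphism
of `X`), the metric `δ` induces the same topology as `d̂`: `δ ≥ d̂` gives one inclusion of
balls, and for every `x` and `r > 0` there is `r' > 0` with `B̂(x,r') ⊆ B_δ(x,r)`. -/
theorem delta_compatible {X : Type*} [MetricSpace X] (C : ℝ)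
    (hC : ∀ x y : X, dist x y ≤ C)
    (ρ : FreeGroup ℕ →* (X ≃ₜ X)) (s : ℝ) (hs : Real.log 3 < s) :
    (∀ x y : X, dist x y ≤ delta ρ s x y) ∧
    (∀ (x : X) (r : ℝ), 0 < r → ∃ r' > 0, ∀ y : X, dist x y < r' → delta ρ s x y < r) := by
  classical
  have hs0 : 0 < s := lt_trans (Real.log_pos (by norm_num)) hs
  have hFsum : Summable (fun g : FreeGroup ℕ => Real.exp (-s * (wl g : ℝ))) :=
    summable_exp_wl hs
  set M : ℝ := max C 0 with hM
  have hM0 : 0 ≤ M := le_max_right _ _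
  have hdistM : ∀ x y : X, dist x y ≤ M := fun x y => le_trans (hC x y) (le_max_left _ _)
  have hexp_le_one : ∀ g : FreeGroup ℕ, Real.exp (-s * (wl g : ℝ)) ≤ 1 := by
    intro g
    apply Real.exp_le_one_iff.mpr
    have : (0:ℝ) ≤ s * (wl g : ℝ) := by positivity
    linarith
  have hterm_nonneg : ∀ (x y : X) (g : FreeGroup ℕ),
      0 ≤ Real.exp (-s * (wl g : ℝ)) * dist ((ρ g).symm x) ((ρ g).symm y) :=
    fun x y g => mul_nonneg (Real.exp_nonneg _) dist_nonneg
  have hterm_le : ∀ (x y : X) (g : FreeGroup ℕ),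
      Real.exp (-s * (wl g : ℝ)) * dist ((ρ g).symm x) ((ρ g).symm y)
        ≤ M * Real.exp (-s * (wl g : ℝ)) := by
    intro x y g
    rw [mul_comm M]
    exact mul_le_mul_of_nonneg_left (hdistM _ _) (Real.exp_nonneg _)
  have hMsum : Summable (fun g : FreeGroup ℕ => M * Real.exp (-s * (wl g : ℝ))) :=
    hFsum.mul_left M
  have hsum : ∀ x y : X,
      Summable (fun g : FreeGroup ℕ =>
        Real.exp (-s * (wl g : ℝ)) * dist ((ρ g).symm x) ((ρ g).symm y)) := by
    intro x y
    exact Summable.of_nonneg_of_le (hterm_nonneg x y) (hterm_le x y) hMsum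
  constructor
  · -- dist ≤ delta
    intro x y
    have h1 := Summable.le_tsum (hsum x y) 1 (fun g _ => hterm_nonneg x y g)
    have hwl1 : wl (1 : FreeGroup ℕ) = 0 := by
      simp [wl, map_one]
    have hρ1x : ((ρ 1).symm : X → X) x = x := by
      rw [map_one ρ]; rfl
    have hρ1y : ((ρ 1).symm : X → X) y = y := by
      rw [map_one ρ]; rfl
    rw [hwl1, hρ1x, hρ1y, Nat.cast_zero, mul_zero, Real.exp_zero, one_mul] at h1
    exact h1
  · -- compatibility
    intro x r hr
    obtain ⟨u, hu⟩ : ∃ u : Finset (FreeGroup ℕ),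
        ∑' g : {g : FreeGroup ℕ // g ∉ u}, M * Real.exp (-s * (wl (g : FreeGroup ℕ) : ℝ))
          < r / 2 := by
      have htendsto := tendsto_tsum_compl_atTop_zero
        (fun g : FreeGroup ℕ => M * Real.exp (-s * (wl g : ℝ)))
      have hev := (tendsto_order.1 htendsto).2 (r / 2) (by linarith)
      exact hev.exists
    set b : ℝ := r / (2 * (u.card + 1)) with hb
    have hbpos : 0 < b := by positivity
    have hev : ∀ᶠ y in nhds x, ∀ g ∈ u, dist ((ρ g).symm x) ((ρ g).symm y) < b := by
      rw [Finset.eventually_all]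
      intro g _
      have hcont : Continuous fun y : X => dist ((ρ g).symm x) ((ρ g).symm y) :=
        continuous_const.dist (ρ g).symm.continuous
      have h0 : dist ((ρ g).symm x) ((ρ g).symm x) = 0 := dist_self _
      have := hcont.continuousAt (x := x)
      rw [ContinuousAt, h0] at this
      exact this.eventually_lt_const hbpos
    rw [Metric.eventually_nhds_iff] at hev
    obtain ⟨ε, hε, hball⟩ := hev
    refine ⟨ε, hε, fun y hxy => ?_⟩
    have hy : ∀ g ∈ u, dist ((ρ g).symm x) ((ρ g).symm y) < b :=
      hball (show dist y x < ε by rw [dist_comm]; exact hxy)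
    have hsplit := Summable.sum_add_tsum_compl (s := u) (hsum x y)
    have hdelta : delta ρ s x y
        = ∑ g ∈ u, Real.exp (-s * (wl g : ℝ)) * dist ((ρ g).symm x) ((ρ g).symm y)
          + ∑' g : ((u : Set (FreeGroup ℕ))ᶜ : Set (FreeGroup ℕ)),
              Real.exp (-s * (wl (g : FreeGroup ℕ) : ℝ))
                * dist ((ρ g).symm x) ((ρ g).symm y) := by
      rw [hsplit]; rfl
    have hhead : ∑ g ∈ u, Real.exp (-s * (wl g : ℝ)) * dist ((ρ g).symm x) ((ρ g).symm y)
        ≤ (u.card : ℝ) * b := by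
      have := Finset.sum_le_card_nsmul u
        (fun g => Real.exp (-s * (wl g : ℝ)) * dist ((ρ g).symm x) ((ρ g).symm y)) b
        (fun g hg => le_of_lt (lt_of_le_of_lt
          (mul_le_of_le_one_left dist_nonneg (hexp_le_one g)) (hy g hg)))
      simpa [nsmul_eq_mul] using this
    have hheadlt : (u.card : ℝ) * b < r / 2 := by
      rw [hb, ← mul_div_assoc, div_lt_div_iff₀ (by positivity) (by norm_num : (0:ℝ) < 2)]
      have hn : (0:ℝ) ≤ (u.card : ℝ) := Nat.cast_nonneg _
      nlinarith
    have htail : ∑' g : ((u : Set (FreeGroup ℕ))ᶜ : Set (FreeGroup ℕ)),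
        Real.exp (-s * (wl (g : FreeGroup ℕ) : ℝ)) * dist ((ρ g).symm x) ((ρ g).symm y)
        ≤ ∑' g : {g : FreeGroup ℕ // g ∉ u}, M * Real.exp (-s * (wl (g : FreeGroup ℕ) : ℝ)) := by
      apply Summable.tsum_le_tsum
      · intro g
        exact hterm_le x y g
      · exact (hsum x y).subtype _
      · exact hMsum.subtype _
    calc delta ρ s x y
        = _ + _ := hdelta
      _ < r / 2 + r / 2 := add_lt_add_of_le_of_lt
          (hhead.trans hheadlt.le) (lt_of_le_of_lt htail hu)
      _ = r := by ring
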